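/- For every step size s with 0 < s ≤ 1/L, along the iterates of critical NAG the Lyapunov function E(k) = f(y_{k−1}) − f(x⋆) + (1/2)‖v_k‖², where v_k = (x_k − x_{k−1})/√s, satisfies E(k+1) − E(k) ≤ − (s/2) ‖∇f(y_{k−1})‖² for all k ≥ 1. -/

import Mathlib

/-!
Write `v = x_k - x_{k-1}`. The update gives `x_{k+1} - x_k = v - s ∇f(y_k)`, so the kinetic part
of `E` changes by `-⟪∇f(y_k), v⟫ + (s/2)‖∇f(y_k)‖²`. For convex `f` with `L`-Lipschitz gradient,
`f(y_k) + ⟪∇f(y_k), y_{k-1} - y_k⟫ + ‖∇f(y_{k-1}) - ∇f(y_k)‖² / (2L) ≤ f(y_{k-1})`, and since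
`y_{k-1} - y_k = s ∇f(y_{k-1}) - v` and `s ≤ 1/L`, the terms in `v` cancel and the remaining
gradient terms complete the square to `-(s/2)‖∇f(y_{k-1})‖²`.
-/

open Set RealInnerProductSpace AffineMap

section

variable {F : Type*} [NormedAddCommGroup F] [InnerProductSpace ℝ F] [CompleteSpace F]

theorem HasGradientAt.hasDerivAt_comp_lineMap {f : F → ℝ} {g a b : F} {t : ℝ}
    (hf : HasGradientAt f g (lineMap a b t)) :
    HasDerivAt (f ∘ lineMap a b) ⟪g, b - a⟫ t :=
  hf.hasFDerivAt.comp_hasDerivAt t hasDerivAt_lineMap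

theorem ConvexOn.add_inner_sub_le_of_hasGradientAt {f : F → ℝ} {g a : F}
    (hconv : ConvexOn ℝ univ f) (hf : HasGradientAt f g a) (b : F) :
    f a + ⟪g, b - a⟫ ≤ f b := by
  have hline : ConvexOn ℝ univ (f ∘ lineMap a b) :=
    hconv.comp_affineMap (lineMap a b : ℝ →ᵃ[ℝ] F)
  have hderiv : HasDerivAt (f ∘ lineMap a b) ⟪g, b - a⟫ (0 : ℝ) :=
    HasGradientAt.hasDerivAt_comp_lineMap (by rwa [lineMap_apply_zero])
  have := hline.le_slope_of_hasDerivAt (mem_univ 0) (mem_univ 1) zero_lt_one hderiv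
  rw [slope_def_field] at this
  simp only [Function.comp_apply, lineMap_apply_zero, lineMap_apply_one, sub_zero, div_one] at this
  linarith

theorem le_add_inner_sub_add_sq_of_lipschitz_gradient {f : F → ℝ} {f' : F → F} {L : ℝ}
    (hgrad : ∀ z, HasGradientAt f (f' z) z) (hlip : ∀ z w, ‖f' z - f' w‖ ≤ L * ‖z - w‖)
    (a b : F) :
    f b ≤ f a + ⟪f' a, b - a⟫ + L / 2 * ‖b - a‖ ^ 2 := by
  set φ : ℝ → ℝ := fun t ↦ f (lineMap a b t) - t * ⟪f' a, b - a⟫ - L / 2 * t ^ 2 * ‖b - a‖ ^ 2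
  have hφ (t : ℝ) : HasDerivAt φ
      (⟪f' (lineMap a b t), b - a⟫ - ⟪f' a, b - a⟫ - L * t * ‖b - a‖ ^ 2) t := by
    have hquad : HasDerivAt (fun t ↦ L / 2 * t ^ 2 * ‖b - a‖ ^ 2) (L * t * ‖b - a‖ ^ 2) t :=
      (((hasDerivAt_pow 2 t).const_mul (L / 2)).mul_const _).congr_deriv (by ring)
    have hlin : HasDerivAt (fun t ↦ t * ⟪f' a, b - a⟫) ⟪f' a, b - a⟫ t := hasDerivAt_mul_const _
    exact ((hgrad (lineMap a b t)).hasDerivAt_comp_lineMap.sub hlin).sub hquad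
  have hφ' : ∀ t ∈ interior (Icc (0 : ℝ) 1), deriv φ t ≤ 0 := by
    intro t ht
    rw [interior_Icc] at ht
    have hgap : ⟪f' (lineMap a b t) - f' a, b - a⟫ ≤ L * t * ‖b - a‖ ^ 2 :=
      calc ⟪f' (lineMap a b t) - f' a, b - a⟫
          ≤ ‖f' (lineMap a b t) - f' a‖ * ‖b - a‖ := real_inner_le_norm _ _
        _ ≤ L * ‖lineMap a b t - a‖ * ‖b - a‖ := by gcongr; exact hlip _ _
        _ = L * t * ‖b - a‖ ^ 2 := by
          rw [lineMap_apply_module', add_sub_cancel_right, norm_smul, Real.norm_of_nonneg ht.1.le]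
          ring
    rw [(hφ t).deriv, ← inner_sub_left]
    linarith
  have hanti : AntitoneOn φ (Icc 0 1) :=
    antitoneOn_of_deriv_nonpos (convex_Icc 0 1) (fun t _ ↦ (hφ t).continuousAt.continuousWithinAt)
      (fun t _ ↦ (hφ t).differentiableAt.differentiableWithinAt) hφ'
  have h01 := hanti (left_mem_Icc.mpr zero_le_one) (right_mem_Icc.mpr zero_le_one) zero_le_one
  simp only [φ, lineMap_apply_zero, lineMap_apply_one] at h01
  linarith

theorem ConvexOn.add_inner_sub_add_sq_le_of_lipschitz_gradient {f : F → ℝ} {f' : F → F} {L : ℝ}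
    (hL : 0 < L) (hconv : ConvexOn ℝ univ f) (hgrad : ∀ z, HasGradientAt f (f' z) z)
    (hlip : ∀ z w, ‖f' z - f' w‖ ≤ L * ‖z - w‖) (a b : F) :
    f a + ⟪f' a, b - a⟫ + 1 / (2 * L) * ‖f' b - f' a‖ ^ 2 ≤ f b := by
  set u := f' b - f' a
  -- compare both first-order models of `f` at the gradient step from `b`
  set c := b - L⁻¹ • u
  have hlow := hconv.add_inner_sub_le_of_hasGradientAt (hgrad a) c
  have hup := le_add_inner_sub_add_sq_of_lipschitz_gradient hgrad hlip b c
  have hcb : c - b = -(L⁻¹ • u) := by simp [c]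
  have hca : c - a = (b - a) - L⁻¹ • u := by simp only [c]; abel
  rw [hcb, inner_neg_right, real_inner_smul_right, norm_neg, norm_smul, Real.norm_of_nonneg
    (inv_nonneg.mpr hL.le)] at hup
  rw [hca, inner_sub_right, real_inner_smul_right] at hlow
  have hu : ⟪f' b, u⟫ - ⟪f' a, u⟫ = ‖u‖ ^ 2 := by
    rw [← inner_sub_left, real_inner_self_eq_norm_sq]
  have hquad : L / 2 * (L⁻¹ * ‖u‖) ^ 2 = 1 / (2 * L) * ‖u‖ ^ 2 := by field_simp
  have hlin : L⁻¹ * ⟪f' b, u⟫ - L⁻¹ * ⟪f' a, u⟫ = 2 * (1 / (2 * L) * ‖u‖ ^ 2) := by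
    rw [← mul_sub, hu]; field_simp
  linarith

theorem ConvexOn.critical_nag_step_energy_le {f : F → ℝ} {f' : F → F} {L s : ℝ}
    (hL : 0 < L) (hs : 0 < s) (hsL : s ≤ 1 / L) (hconv : ConvexOn ℝ univ f)
    (hgrad : ∀ z, HasGradientAt f (f' z) z) (hlip : ∀ z w, ‖f' z - f' w‖ ≤ L * ‖z - w‖)
    {y₀ y₁ x₀ x₁ x₂ : F} (hx₁ : x₁ = y₀ - s • f' y₀) (hy₁ : y₁ = (2 : ℝ) • x₁ - x₀)
    (hx₂ : x₂ = y₁ - s • f' y₁) :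
    (f y₁ + 1 / 2 * ‖(√s)⁻¹ • (x₂ - x₁)‖ ^ 2) - (f y₀ + 1 / 2 * ‖(√s)⁻¹ • (x₁ - x₀)‖ ^ 2) ≤
      -(s / 2) * ‖f' y₀‖ ^ 2 := by
  have hnorm (w : F) : ‖(√s)⁻¹ • w‖ ^ 2 = ‖w‖ ^ 2 / s := by
    rw [norm_smul, mul_pow, norm_inv, Real.norm_of_nonneg (Real.sqrt_nonneg s), inv_pow,
      Real.sq_sqrt hs.le, inv_mul_eq_div]
  have hkinetic : 1 / 2 * ‖(√s)⁻¹ • (x₂ - x₁)‖ ^ 2 - 1 / 2 * ‖(√s)⁻¹ • (x₁ - x₀)‖ ^ 2 =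
      -⟪f' y₁, x₁ - x₀⟫ + s / 2 * ‖f' y₁‖ ^ 2 := by
    have hstep : x₂ - x₁ = (x₁ - x₀) - s • f' y₁ := by rw [hx₂, hy₁]; module
    rw [hstep, hnorm, hnorm, norm_sub_sq_real, inner_smul_right, norm_smul,
      Real.norm_of_nonneg hs.le, real_inner_comm]
    field_simp
    ring
  have hcoco := hconv.add_inner_sub_add_sq_le_of_lipschitz_gradient hL hgrad hlip y₁ y₀
  have hdiff : y₀ - y₁ = s • f' y₀ - (x₁ - x₀) := by rw [hy₁, hx₁]; module
  rw [hdiff, inner_sub_right, real_inner_smul_right] at hcoco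
  have hsL' : s / 2 ≤ 1 / (2 * L) := by
    rw [le_div_iff₀ hL] at hsL
    rw [le_div_iff₀ (by positivity)]
    linarith
  have hgap := mul_le_mul_of_nonneg_right hsL' (sq_nonneg ‖f' y₀ - f' y₁‖)
  have hexpand := norm_sub_sq_real (f' y₀) (f' y₁)
  rw [real_inner_comm] at hcoco
  linear_combination hkinetic + hcoco + hgap - s / 2 * hexpand

end

theorem critical_NAG_lyapunov_decay
    (s L : ℝ) (hL : 0 < L) (hs : 0 < s) (hsL : s ≤ 1 / L)
    {d : ℕ} (f : EuclideanSpace ℝ (Fin d) → ℝ)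
    (f' : EuclideanSpace ℝ (Fin d) → EuclideanSpace ℝ (Fin d))
    (xstar : EuclideanSpace ℝ (Fin d))
    (x y : ℕ → EuclideanSpace ℝ (Fin d))
    (hconv : ConvexOn ℝ Set.univ f)
    (hgrad : ∀ z, HasGradientAt f (f' z) z)
    (hlip : ∀ z w, ‖f' z - f' w‖ ≤ L * ‖z - w‖)
    (hx : ∀ k : ℕ, 1 ≤ k → x k = y (k - 1) - s • f' (y (k - 1)))
    (hy : ∀ k : ℕ, 1 ≤ k → y k = (2 : ℝ) • x k - x (k - 1)) :
    ∀ k : ℕ, 1 ≤ k →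
      (f (y k) - f xstar + (1 / 2) * ‖(Real.sqrt s)⁻¹ • (x (k + 1) - x k)‖ ^ 2) -
          (f (y (k - 1)) - f xstar +
            (1 / 2) * ‖(Real.sqrt s)⁻¹ • (x k - x (k - 1))‖ ^ 2) ≤
        -(s / 2) * ‖f' (y (k - 1))‖ ^ 2 := by
  intro k hk
  have hx_succ : x (k + 1) = y k - s • f' (y k) := by simpa using hx (k + 1) k.succ_pos
  have := hconv.critical_nag_step_energy_le hL hs hsL hgrad hlip (hx k hk) (hy k hk) hx_succ
  linarith
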